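/- arXiv:1601.06051 — 2 statements merged into one kernel-verified Lean document; each statement's English description precedes it below -/
import Mathlib

section
/- Let w : ℝ → ℝ be C¹ with support in [0,1]. Let f : 𝕋^d → ℂ be continuous and ρ ∈ ℝ^d. Define U f(θ) = f(θ + ρ). Then |Σ_{n=0}^{N-1} w(n/N) (Uf - f)(nρ)| ≤ ‖f‖_∞ · ‖w'‖_∞, where the argument nρ is taken mod 1 in each coordinate. Equivalently, (1/N) Σ_n w(n/N)(Uf - f)(nρ) is bounded in absolute value by (1/N)‖f‖_∞‖w'‖_∞. -/
/-!
Write `g n = f(nρ)`, so that `(Uf - f)(nρ) = g (n+1) - g n`. Summation by parts moves the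
difference onto the weights: since `w 0 = w 1 = 0` the boundary terms vanish and the sum becomes
`∑ (w(n/N) - w((n+1)/N)) g(n+1)`. By the mean value theorem each weight difference is at most
`‖w'‖_∞ / N`, and there are `N` terms, each with `‖g(n+1)‖ ≤ ‖f‖_∞`.
-/

open Finset Set

theorem Finset.sum_range_smul_sub_eq_of_eq_zero {R E : Type*} [Ring R] [AddCommGroup E]
    [Module R E] {a : ℕ → R} {g : ℕ → E} {N : ℕ} (h0 : a 0 = 0) (hN : a N = 0) :
    ∑ n ∈ range N, a n • (g (n + 1) - g n) = ∑ n ∈ range N, (a n - a (n + 1)) • g (n + 1) := by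
  rw [← sub_eq_zero, ← sum_sub_distrib]
  have htel := sum_range_sub (fun n => a n • g n) N
  simp only [h0, hN, zero_smul, sub_zero] at htel
  rw [← htel]
  refine sum_congr rfl fun n _ => ?_
  simp only [smul_sub, sub_smul]
  abel

theorem norm_sum_range_smul_sub_le {E : Type*} [SeminormedAddCommGroup E] [NormedSpace ℝ E]
    {a : ℕ → ℝ} {g : ℕ → E} {N : ℕ} {L M : ℝ} (h0 : a 0 = 0) (hN : a N = 0)
    (ha : ∀ n, |a n - a (n + 1)| ≤ L) (hg : ∀ n, ‖g n‖ ≤ M) :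
    ‖∑ n ∈ range N, a n • (g (n + 1) - g n)‖ ≤ N * (L * M) := by
  rw [sum_range_smul_sub_eq_of_eq_zero h0 hN]
  calc ‖∑ n ∈ range N, (a n - a (n + 1)) • g (n + 1)‖
      ≤ ∑ n ∈ range N, ‖(a n - a (n + 1)) • g (n + 1)‖ := norm_sum_le _ _
    _ ≤ ∑ _n ∈ range N, L * M := by
      refine sum_le_sum fun n _ => ?_
      rw [norm_smul, Real.norm_eq_abs]
      exact mul_le_mul (ha n) (hg _) (norm_nonneg _) ((abs_nonneg _).trans (ha 0))
    _ = N * (L * M) := by rw [sum_const, card_range, nsmul_eq_mul]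

theorem Continuous.support_subset_Ioo_of_subset_Icc {X : Type*} [TopologicalSpace X] [Zero X]
    [T1Space X] {w : ℝ → X} {a b : ℝ} (hw : Continuous w) (hsupp : Function.support w ⊆ Icc a b) :
    Function.support w ⊆ Ioo a b :=
  interior_Icc (a := a) (b := b) ▸ hw.isOpen_support.subset_interior_iff.mpr hsupp

theorem HasCompactSupport.norm_sub_le_iSup_norm_deriv_mul {𝕜 E : Type*} [RCLike 𝕜]
    [NormedAddCommGroup E] [NormedSpace 𝕜 E] {w : 𝕜 → E} (hw : ContDiff 𝕜 1 w)
    (hc : HasCompactSupport w) (x y : 𝕜) :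
    ‖w y - w x‖ ≤ (⨆ t, ‖deriv w t‖) * ‖y - x‖ := by
  have hbdd : BddAbove (range fun t => ‖deriv w t‖) :=
    (hc.deriv.norm.isCompact_range (hw.continuous_deriv le_rfl).norm).bddAbove
  exact convex_univ.norm_image_sub_le_of_norm_deriv_le
    (fun t _ => (hw.differentiable one_ne_zero).differentiableAt)
    (fun t _ => le_ciSup hbdd t) (mem_univ x) (mem_univ y)

theorem AddCircle.coe_nat_mul_add_coe {p : ℝ} (n : ℕ) (r : ℝ) :
    (((n : ℝ) * r : ℝ) : AddCircle p) + (r : AddCircle p) = ((((n + 1 : ℕ) : ℝ) * r : ℝ)) := by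
  rw [← AddCircle.coe_add]
  push_cast
  ring_nf

theorem stmt_4 (d : ℕ) (w : ℝ → ℝ) (hw : ContDiff ℝ 1 w)
    (hsupp : Function.support w ⊆ Set.Icc 0 1)
    (f : (Fin d → AddCircle (1:ℝ)) → ℂ) (hf : Continuous f)
    (ρ : Fin d → ℝ) (N : ℕ) :
    ‖∑ n ∈ Finset.range N, (w (n / N) : ℂ) *
        (f ((fun i => (((n : ℝ) * ρ i : ℝ) : AddCircle (1:ℝ))) + fun i => ((ρ i : ℝ) : AddCircle (1:ℝ))) -
         f (fun i => (((n : ℝ) * ρ i : ℝ) : AddCircle (1:ℝ))))‖ ≤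
      (⨆ θ, ‖f θ‖) * (⨆ t, ‖deriv w t‖) := by
  set M := ⨆ θ, ‖f θ‖
  set C := ⨆ t, ‖deriv w t‖
  obtain rfl | hN := Nat.eq_zero_or_pos N
  · rw [range_zero, sum_empty, norm_zero]
    exact mul_nonneg (Real.iSup_nonneg fun θ => norm_nonneg (f θ))
      (Real.iSup_nonneg fun t => norm_nonneg (deriv w t))
  set g : ℕ → ℂ := fun n => f fun i => (((n : ℝ) * ρ i : ℝ) : AddCircle (1:ℝ))
  have hg : ∀ n, ‖g n‖ ≤ M := fun n => le_ciSup (isCompact_range hf.norm).bddAbove _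
  have hIoo := hw.continuous.support_subset_Ioo_of_subset_Icc hsupp
  have hw0 : w 0 = 0 := Function.notMem_support.mp fun h => (hIoo h).1.false
  have hw1 : w 1 = 0 := Function.notMem_support.mp fun h => (hIoo h).2.false
  have hcs : HasCompactSupport w :=
    HasCompactSupport.intro isCompact_Icc fun x hx => Function.notMem_support.mp (mt (@hsupp x) hx)
  have hweights : ∀ n : ℕ, |w (n / N) - w ((n + 1 : ℕ) / N)| ≤ C / N := by
    intro n
    have hstep : |(n / N : ℝ) - (n + 1 : ℕ) / N| = 1 / N := by
      rw [Nat.cast_succ, ← sub_div, sub_add_cancel_left, abs_div, abs_neg, abs_one, Nat.abs_cast]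
    have hmvt := hcs.norm_sub_le_iSup_norm_deriv_mul hw ((n + 1 : ℕ) / N : ℝ) (n / N)
    rwa [Real.norm_eq_abs, Real.norm_eq_abs, hstep, mul_one_div] at hmvt
  calc _ = ‖∑ n ∈ range N, w (n / N) • (g (n + 1) - g n)‖ := by
        simp only [Complex.real_smul, Pi.add_def, AddCircle.coe_nat_mul_add_coe, g]
    _ ≤ N * (C / N * M) :=
        norm_sum_range_smul_sub_le (by simpa using hw0) (by simpa [hN.ne'] using hw1) hweights hg
    _ = M * C := by field_simp
end

section
/- Let w : ℝ → ℝ be C^m with support in [0,1] (so w and its first m-1 derivatives vanish at 0 and 1). Then there exists c_m > 0 depending only on w and m such that for every continuous f : 𝕋^d → ℂ, every ρ ∈ ℝ^d, and every N ≥ 1, |(1/N) Σ_{n=0}^{N-1} w(n/N) ((U - I)^m f)(nρ)| ≤ c_m N^{-m} ‖f‖_∞, where (Uf)(θ) = f(θ + ρ). -/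
/-!
Along the orbit, `((U - I)^m f)(n • ρ)` is the `m`-th forward difference `Δ^m F n` of the sequence
`F n = f (n • ρ)`. Summing by parts `m` times moves every difference onto the weight: writing
`∇_h W x = W (x - h) - W x`, the sum becomes `∑_{n < N + m} (∇_{1/N}^m w)(n / N) F n`, with no
boundary terms because `∇_{1/N}^i w` is supported in `(0, 1 + i / N)`. By the mean value theorem
`|∇_h^m w| ≤ h^m ‖w^(m)‖_∞`, and there are at most `(m + 1) N` terms.
-/

open Finset Function Set

theorem fwdDiff_iter_comp_nsmul {A G : Type*} [AddCommMonoid A] [AddCommGroup G]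
    (ρ : A) (f : A → G) (q n : ℕ) :
    (fwdDiff 1)^[q] (fun j : ℕ => f (j • ρ)) n = (fwdDiff ρ)^[q] f (n • ρ) := by
  induction q generalizing f with
  | zero => rfl
  | succ q ih =>
    have hstep : fwdDiff 1 (fun j : ℕ => f (j • ρ)) = fun j => fwdDiff ρ f (j • ρ) := by
      funext j
      simp only [fwdDiff, succ_nsmul]
    rw [iterate_succ_apply, iterate_succ_apply, hstep, ih]

theorem support_fwdDiff_neg_subset_Ioo {G : Type*} [AddCommGroup G] {g : ℝ → G} {a b h : ℝ}
    (hh : 0 ≤ h) (hg : support g ⊆ Ioo a b) : support (fwdDiff (-h) g) ⊆ Ioo a (b + h) := by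
  have hzero : ∀ y ∉ Ioo a b, g y = 0 := fun y hy => notMem_support.1 (mt (@hg y) hy)
  refine fun x hx => by_contra fun hx' => hx ?_
  have hout : x ∉ Ioo a b ∧ x - h ∉ Ioo a b := by
    simp only [Set.mem_Ioo] at hx' ⊢
    constructor <;> exact fun ⟨h₁, h₂⟩ => hx' ⟨by linarith, by linarith⟩
  simp only [fwdDiff, ← sub_eq_add_neg, hzero _ hout.1, hzero _ hout.2, sub_zero]

theorem support_fwdDiff_neg_iter_subset_Ioo {G : Type*} [AddCommGroup G] {g : ℝ → G} {a b h : ℝ}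
    (hh : 0 ≤ h) (hg : support g ⊆ Ioo a b) (q : ℕ) :
    support ((fwdDiff (-h))^[q] g) ⊆ Ioo a (b + q * h) := by
  induction q with
  | zero => simpa using hg
  | succ q ih =>
    rw [iterate_succ_apply']
    refine (support_fwdDiff_neg_subset_Ioo hh ih).trans (Ioo_subset_Ioo_right ?_)
    push_cast
    linarith

theorem sum_range_succ_mul_fwdDiff {R : Type*} [CommRing R] (G : ℝ → R) (v : ℕ → R) {h : ℝ}
    {B : ℕ} (h0 : G (-h) = 0) (hB : G (B * h) = 0) :
    ∑ n ∈ range (B + 1), G (n * h) * fwdDiff 1 v n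
      = ∑ n ∈ range (B + 1), fwdDiff (-h) G (n * h) * v n := by
  have hshift := (sum_range_succ' (fun n => G (n * h - h) * v n) (B + 1)).symm.trans
    (sum_range_succ (fun n => G (n * h - h) * v n) (B + 1))
  simp only [Nat.cast_add, Nat.cast_one, add_mul, one_mul, add_sub_cancel_right,
    Nat.cast_zero, zero_mul, zero_sub, h0, add_zero, hB] at hshift
  simp only [fwdDiff, mul_sub, sub_mul, sum_sub_distrib, ← sub_eq_add_neg, hshift]

theorem sum_range_mul_fwdDiff_iter {R : Type*} [CommRing R] {G : ℝ → R} {h : ℝ} (hh : 0 ≤ h)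
    (v : ℕ → R) (m : ℕ) {B : ℕ} (hG : support G ⊆ Ioo 0 (B * h)) :
    ∑ n ∈ range (B + m), G (n * h) * (fwdDiff 1)^[m] v n
      = ∑ n ∈ range (B + m), (fwdDiff (-h))^[m] G (n * h) * v n := by
  induction m generalizing B v with
  | zero => rfl
  | succ m ih =>
    have hG' : support G ⊆ Ioo 0 ((B + 1 : ℕ) * h) :=
      hG.trans (Ioo_subset_Ioo_right (by push_cast; nlinarith))
    have hsupp := support_fwdDiff_neg_iter_subset_Ioo hh hG m
    have hzero : ∀ x ∉ Ioo 0 (B * h + m * h), (fwdDiff (-h))^[m] G x = 0 :=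
      fun x hx => notMem_support.1 fun h' => hx (hsupp h')
    rw [iterate_succ_apply, show B + (m + 1) = B + 1 + m by omega, ih _ hG', add_right_comm,
      sum_range_succ_mul_fwdDiff, iterate_succ_apply']
    · exact hzero _ fun hx => by linarith [hx.1]
    · exact hzero _ fun hx => by push_cast at hx; linarith [hx.2]

section Smooth

variable {E : Type*} [NormedAddCommGroup E] [NormedSpace ℝ E]

theorem iteratedDeriv_fwdDiff {q : ℕ} {v : ℝ → E} (hv : ContDiff ℝ q v) (h : ℝ) :
    iteratedDeriv q (fwdDiff h v) = fwdDiff h (iteratedDeriv q v) := by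
  funext x
  have hshift : ContDiff ℝ q (fun y => v (y + h)) := hv.comp (contDiff_id.add contDiff_const)
  rw [show fwdDiff h v = fun y => v (y + h) - v y from rfl,
    iteratedDeriv_fun_sub hshift.contDiffAt hv.contDiffAt, iteratedDeriv_comp_add_const]
  rfl

theorem norm_fwdDiff_le {v : ℝ → E} {M : ℝ} (hv : Differentiable ℝ v)
    (hM : ∀ x, ‖deriv v x‖ ≤ M) (h x : ℝ) : ‖fwdDiff h v x‖ ≤ |h| * M := by
  simpa [fwdDiff, mul_comm] using Convex.norm_image_sub_le_of_norm_deriv_le (fun y _ => hv y)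
    (fun y _ => hM y) convex_univ (mem_univ x) (mem_univ (x + h))

theorem norm_fwdDiff_iter_le {q : ℕ} {v : ℝ → E} {M : ℝ} (hv : ContDiff ℝ q v)
    (hM : ∀ x, ‖iteratedDeriv q v x‖ ≤ M) (h x : ℝ) :
    ‖(fwdDiff h)^[q] v x‖ ≤ |h| ^ q * M := by
  induction q generalizing v M with
  | zero => simpa using hM x
  | succ q ih =>
    have hvq : ContDiff ℝ q v := hv.of_le (by exact_mod_cast q.le_succ)
    have hdiff : ContDiff ℝ q (fwdDiff h v) :=
      (hvq.comp (contDiff_id.add contDiff_const)).sub hvq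
    have hstep : ∀ y, ‖iteratedDeriv q (fwdDiff h v) y‖ ≤ |h| * M := by
      rw [iteratedDeriv_fwdDiff hvq]
      refine norm_fwdDiff_le (hv.differentiable_iteratedDeriv q (by exact_mod_cast q.lt_succ_self))
        (fun y => ?_) h
      rw [← iteratedDeriv_succ]
      exact hM y
    rw [iterate_succ_apply, pow_succ, mul_assoc]
    exact ih hdiff hstep

end Smooth

theorem norm_inv_mul_sum_mul_fwdDiff_iter_le {W : ℝ → ℂ} {m N : ℕ} {M K : ℝ}
    (hW : ContDiff ℝ m W) (hWsupp : support W ⊆ Ioo 0 1)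
    (hM : ∀ x, ‖iteratedDeriv m W x‖ ≤ M) {F : ℕ → ℂ} (hF : ∀ n, ‖F n‖ ≤ K) (hN : 1 ≤ N) :
    ‖(N : ℂ)⁻¹ * ∑ n ∈ range N, W (n / N) * (fwdDiff 1)^[m] F n‖
      ≤ (m + 1) * M * (N : ℝ) ^ (-(m : ℝ)) * K := by
  have hN0 : (0 : ℝ) < N := by exact_mod_cast hN
  set h : ℝ := (N : ℝ)⁻¹ with hh
  have hh0 : 0 ≤ h := by positivity
  have hM0 : 0 ≤ M := (norm_nonneg _).trans (hM 0)
  have hK0 : 0 ≤ K := (norm_nonneg _).trans (hF 0)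
  have hWsupp' : support W ⊆ Ioo 0 (N * h) := by rwa [hh, mul_inv_cancel₀ hN0.ne']
  have hsum : ∑ n ∈ range N, W (n / N) * (fwdDiff 1)^[m] F n
      = ∑ n ∈ range (N + m), (fwdDiff (-h))^[m] W (n * h) * F n := by
    simp only [div_eq_mul_inv]
    rw [← sum_range_mul_fwdDiff_iter hh0 F m hWsupp']
    refine sum_subset (range_subset_range.2 (N.le_add_right m)) fun n _ hn => ?_
    have hNn : (N : ℝ) ≤ n := by exact_mod_cast not_lt.1 (mt mem_range.2 hn)
    rw [notMem_support.1 fun hn' => (hWsupp' hn').2.not_ge (by gcongr), zero_mul]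
  have hterm : ∀ n : ℕ, ‖(fwdDiff (-h))^[m] W (n * h) * F n‖ ≤ h ^ m * M * K := fun n => by
    have := norm_fwdDiff_iter_le hW hM (-h) (n * h)
    rw [abs_neg, abs_of_nonneg hh0] at this
    rw [norm_mul]
    exact mul_le_mul this (hF n) (norm_nonneg _) (by positivity)
  have hmean : h * (N + m) ≤ m + 1 := by
    rw [hh, mul_add, inv_mul_cancel₀ hN0.ne', add_comm]
    gcongr
    exact mul_le_of_le_one_left (Nat.cast_nonneg m) (inv_le_one_of_one_le₀ (by exact_mod_cast hN))
  calc ‖(N : ℂ)⁻¹ * ∑ n ∈ range N, W (n / N) * (fwdDiff 1)^[m] F n‖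
      = h * ‖∑ n ∈ range (N + m), (fwdDiff (-h))^[m] W (n * h) * F n‖ := by
        rw [hsum, norm_mul, norm_inv, Complex.norm_natCast]
    _ ≤ h * ((N + m) * (h ^ m * M * K)) := by
        gcongr
        simpa using norm_sum_le_of_le (range (N + m)) fun n _ => hterm n
    _ = (h * (N + m)) * M * h ^ m * K := by ring
    _ ≤ (m + 1) * M * (N : ℝ) ^ (-(m : ℝ)) * K := by
        rw [Real.rpow_neg hN0.le, Real.rpow_natCast, ← inv_pow]
        gcongr

theorem stmt_5 (d m : ℕ) (w : ℝ → ℝ) (hw : ContDiff ℝ m w)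
    (hsupp : Function.support w ⊆ Set.Icc 0 1) :
    ∃ c : ℝ, 0 < c ∧ ∀ (f : (Fin d → AddCircle (1:ℝ)) → ℂ), Continuous f →
      ∀ (ρ : Fin d → ℝ) (N : ℕ), 1 ≤ N →
      ‖(N : ℂ)⁻¹ * ∑ n ∈ Finset.range N, (w (n / N) : ℂ) *
          ((fun g : (Fin d → AddCircle (1:ℝ)) → ℂ =>
              fun θ => g (θ + fun i => ((ρ i : ℝ) : AddCircle (1:ℝ))) - g θ)^[m] f)
            (fun i => (((n : ℝ) * ρ i : ℝ) : AddCircle (1:ℝ)))‖ ≤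
        c * (N : ℝ) ^ (-(m : ℝ)) * ⨆ θ, ‖f θ‖ := by
  set W : ℝ → ℂ := fun x => (w x : ℂ)
  have hW : ContDiff ℝ m W := Complex.ofRealCLM.contDiff.comp hw
  have hWsupp : support W ⊆ Ioo 0 1 := by
    rw [show support W = support w by ext; simp [W], ← interior_Icc]
    exact interior_maximal hsupp (isOpen_ne_fun hw.continuous continuous_const)
  obtain ⟨M, hM⟩ : ∃ M, ∀ x, ‖iteratedDeriv m W x‖ ≤ M := by
    have hcs : HasCompactSupport W := HasCompactSupport.intro isCompact_Icc fun x hx =>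
      notMem_support.1 fun hx' => hx (Ioo_subset_Icc_self (hWsupp hx'))
    simpa [norm_iteratedFDeriv_eq_norm_iteratedDeriv] using
      (hcs.iteratedFDeriv m).exists_bound_of_continuous (hW.continuous_iteratedFDeriv le_rfl)
  refine ⟨(m + 1) * max M 1, by positivity, fun f hf ρ N hN => ?_⟩
  set ρ' : Fin d → AddCircle (1:ℝ) := fun i => (ρ i : AddCircle (1:ℝ))
  have horbit : ∀ n : ℕ, n • ρ' = fun i => (((n : ℝ) * ρ i : ℝ) : AddCircle (1:ℝ)) := fun n => by
    ext i; simp [ρ', ← nsmul_eq_mul]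
  have hbdd : BddAbove (range fun θ => ‖f θ‖) := (isCompact_range hf.norm).bddAbove
  have hbound := norm_inv_mul_sum_mul_fwdDiff_iter_le hW hWsupp
    (fun x => (hM x).trans (le_max_left _ 1)) (F := fun j => f (j • ρ'))
    (fun n => le_ciSup hbdd _) hN
  simp only [fwdDiff_iter_comp_nsmul] at hbound
  simp only [horbit] at hbound
  exact hbound
end
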